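/- Let M̄ > 0. There exists a constant C > 0 such that: for every N ≥ 1, every λ > 0 with λ < (3/2)·M̄^{−1/3}, every family of points x_1,…,x_N ∈ ℝ³ with M^N(λ) ≤ M̄·N·λ³, every x ∈ ℝ³ and every d > 0, one has (1/N)·∑_{i : |x−x_i| > d/2} |x−x_i|^{−1} ≤ C·( M̄·λ³/d + M̄^{1/3} ), where the sum runs over the indices i with |x−x_i| > d/2 (Euclidean norm). -/

import Mathlib

/-- The `l∞` norm of a point of `ℝ³`. -/
noncomputable def linf (x : EuclideanSpace ℝ (Fin 3)) : ℝ := max (max |x 0| |x 1|) |x 2|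

/-- The particle concentration `M^N(λ)`: the supremum over centers `c ∈ ℝ³` of the number of
particles lying in the closed `l∞`-ball of center `c` and radius `r`. -/
noncomputable def Mconc (N : ℕ) (x : Fin N → EuclideanSpace ℝ (Fin 3)) (r : ℝ) : ℕ :=
  sSup { m : ℕ | ∃ c : EuclideanSpace ℝ (Fin 3), m = Nat.card {i : Fin N | linf (x i - c) ≤ r} }

/-!
The Euclidean ball of radius `R` lies in a cube of side `2R`, which is covered by
`(⌊R/λ⌋ + 1)³` cubes of half-side `λ`; so the concentration bound gives
`#{i : |z - xᵢ| ≤ R} ≤ M̄ N (R + λ)³`. Cutting the sum of `|z - xᵢ|⁻¹` into dyadic shells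
`2ᵏ r < |z - xᵢ| ≤ 2ᵏ⁺¹ r` starting at `r = d/2`, the shell `k` contributes at most
`M̄ N ((2ᵏ r)² + λ³ / (2ᵏ r))` up to a constant. The first part is geometric and is summed up to
the scale `M̄^{-1/3}`, giving `M̄^{1/3} N`; the second is summed over all shells, giving
`M̄ N λ³ / d`. Beyond the scale `M̄^{-1/3}` each of the `N` terms is at most `M̄^{1/3}`.
-/

open Finset

section CubeCover

lemma card_filter_linf_le_Mconc {N : ℕ} (x : Fin N → EuclideanSpace ℝ (Fin 3)) (r : ℝ)
    (c : EuclideanSpace ℝ (Fin 3)) : #{i | linf (x i - c) ≤ r} ≤ Mconc N x r := by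
  have hcard : ∀ c : EuclideanSpace ℝ (Fin 3),
      Nat.card {i : Fin N | linf (x i - c) ≤ r} = #{i | linf (x i - c) ≤ r} := fun c => by
    rw [Nat.card_eq_fintype_card, Fintype.card_subtype]; rfl
  refine le_csSup ⟨N, ?_⟩ ⟨c, (hcard c).symm⟩
  rintro _ ⟨c', rfl⟩
  exact (hcard c').trans_le ((card_filter_le _ _).trans (by simp))

lemma abs_sub_two_mul_floor_add_one_mul_le {t lam : ℝ} (ht : 0 ≤ t) (hlam : 0 < lam) :
    |t - (2 * ⌊t / (2 * lam)⌋₊ + 1) * lam| ≤ lam := by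
  have hlo := Nat.floor_le (div_nonneg ht (by positivity : (0:ℝ) ≤ 2 * lam))
  have hhi := Nat.lt_floor_add_one (t / (2 * lam))
  rw [le_div_iff₀ (by positivity)] at hlo
  rw [div_lt_iff₀ (by positivity)] at hhi
  rw [abs_le]; constructor <;> nlinarith

/-- Centers of a grid of `l∞`-cubes of half-side `lam` covering `z + [-R, R]³`;
`cubeIndex z R lam y` is the index of a cube of that grid containing `y`. -/
noncomputable def cubeCenter (z : EuclideanSpace ℝ (Fin 3)) (R lam : ℝ) (κ : Fin 3 → ℕ) :
    EuclideanSpace ℝ (Fin 3) :=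
  WithLp.toLp 2 fun j => z j - R + (2 * κ j + 1) * lam

noncomputable def cubeIndex (z : EuclideanSpace ℝ (Fin 3)) (R lam : ℝ)
    (y : EuclideanSpace ℝ (Fin 3)) : Fin 3 → ℕ :=
  fun j => ⌊(y j - z j + R) / (2 * lam)⌋₊

lemma linf_le_of_forall_abs_le {v : EuclideanSpace ℝ (Fin 3)} {r : ℝ} (h : ∀ j, |v j| ≤ r) :
    linf v ≤ r :=
  max_le (max_le (h 0) (h 1)) (h 2)

variable {z y : EuclideanSpace ℝ (Fin 3)} {R lam : ℝ}

lemma abs_sub_le_of_dist_le (h : dist z y ≤ R) (j : Fin 3) : |y j - z j| ≤ R := by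
  have := PiLp.norm_apply_le (y - z) j
  rw [← dist_eq_norm, dist_comm] at this
  simpa [Real.norm_eq_abs] using this.trans h

lemma linf_sub_cubeCenter_cubeIndex_le (hlam : 0 < lam) (h : dist z y ≤ R) :
    linf (y - cubeCenter z R lam (cubeIndex z R lam y)) ≤ lam := by
  refine linf_le_of_forall_abs_le fun j => ?_
  have hj := abs_le.mp (abs_sub_le_of_dist_le h j)
  have := abs_sub_two_mul_floor_add_one_mul_le (t := y j - z j + R) (by linarith) hlam
  simp only [cubeCenter, cubeIndex, PiLp.sub_apply]
  convert this using 2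
  ring

lemma cubeIndex_mem_piFinset (hlam : 0 < lam) (h : dist z y ≤ R) :
    cubeIndex z R lam y ∈ Fintype.piFinset fun _ => range (⌊R / lam⌋₊ + 1) := by
  refine Fintype.mem_piFinset.mpr fun j => mem_range_succ_iff.mpr (Nat.floor_le_floor ?_)
  have hj := abs_le.mp (abs_sub_le_of_dist_le h j)
  rw [div_le_div_iff₀ (by positivity) hlam]
  nlinarith

lemma card_filter_dist_le_le_mul_Mconc {N : ℕ} (x : Fin N → EuclideanSpace ℝ (Fin 3))
    (hlam : 0 < lam) : #{i | dist z (x i) ≤ R} ≤ Mconc N x lam * (⌊R / lam⌋₊ + 1) ^ 3 := by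
  calc #{i | dist z (x i) ≤ R}
      ≤ Mconc N x lam * #(Fintype.piFinset fun _ : Fin 3 => range (⌊R / lam⌋₊ + 1)) := by
        refine card_le_mul_card_image_of_maps_to
          (fun i hi => cubeIndex_mem_piFinset hlam (mem_filter.mp hi).2) _ fun κ _ => ?_
        refine (card_le_card fun i hi => ?_).trans
          (card_filter_linf_le_Mconc x lam (cubeCenter z R lam κ))
        obtain ⟨hdist, rfl⟩ := mem_filter.mp hi
        exact mem_filter.mpr
          ⟨mem_univ _, linf_sub_cubeCenter_cubeIndex_le hlam (mem_filter.mp hdist).2⟩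
    _ = Mconc N x lam * (⌊R / lam⌋₊ + 1) ^ 3 := by simp

lemma card_filter_dist_le_le_cube {N : ℕ} (x : Fin N → EuclideanSpace ℝ (Fin 3)) {M : ℝ}
    (hlam : 0 < lam) (hR : 0 ≤ R) (hM : (Mconc N x lam : ℝ) ≤ M * N * lam ^ 3) :
    (#{i | dist z (x i) ≤ R} : ℝ) ≤ M * N * (R + lam) ^ 3 := by
  have hfloor : (⌊R / lam⌋₊ + 1 : ℝ) * lam ≤ R + lam := by
    nlinarith [Nat.floor_le (div_nonneg hR hlam.le), mul_div_cancel₀ R hlam.ne']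
  calc (#{i | dist z (x i) ≤ R} : ℝ) ≤ Mconc N x lam * (⌊R / lam⌋₊ + 1) ^ 3 := by
        exact_mod_cast card_filter_dist_le_le_mul_Mconc x hlam
    _ ≤ M * N * lam ^ 3 * (⌊R / lam⌋₊ + 1) ^ 3 := by gcongr
    _ = M * N * ((⌊R / lam⌋₊ + 1 : ℝ) * lam) ^ 3 := by ring
    _ ≤ M * N * (R + lam) ^ 3 := by
        have : 0 ≤ M * N :=
          (mul_nonneg_iff_of_pos_right (by positivity)).mp ((Nat.cast_nonneg _).trans hM)
        gcongr

end CubeCover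

section Dyadic

variable {ι : Type*} (s : Finset ι) (ρ : ι → ℝ)

lemma sum_inv_filter_lt_le_card_mul_inv {T : ℝ} (hT : 0 < T) :
    ∑ i ∈ s with T < ρ i, (ρ i)⁻¹ ≤ #s * T⁻¹ := by
  calc ∑ i ∈ s with T < ρ i, (ρ i)⁻¹ ≤ ∑ i ∈ s with T < ρ i, T⁻¹ :=
        sum_le_sum fun i hi => inv_anti₀ hT (mem_filter.mp hi).2.le
    _ ≤ #s * T⁻¹ := by
        rw [sum_const, nsmul_eq_mul]
        gcongr
        exact filter_subset _ _

lemma sum_inv_filter_lt_le_dyadic {r : ℝ} (hr : 0 < r) (K : ℕ) :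
    ∑ i ∈ s with r < ρ i, (ρ i)⁻¹ ≤
      ∑ k ∈ range K, #{i ∈ s | ρ i ≤ 2 * (2 ^ k * r)} * (2 ^ k * r)⁻¹
        + ∑ i ∈ s with 2 ^ K * r < ρ i, (ρ i)⁻¹ := by
  induction K with
  | zero => simp
  | succ K ih =>
    rw [show (2 : ℝ) ^ (K + 1) * r = 2 * (2 ^ K * r) by ring]
    have hshell : ∑ i ∈ s with 2 ^ K * r < ρ i, (ρ i)⁻¹ =
        ∑ i ∈ s with 2 ^ K * r < ρ i ∧ ρ i ≤ 2 * (2 ^ K * r), (ρ i)⁻¹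
          + ∑ i ∈ s with 2 * (2 ^ K * r) < ρ i, (ρ i)⁻¹ := by
      rw [← sum_filter_add_sum_filter_not _ (fun i => ρ i ≤ 2 * (2 ^ K * r)), filter_filter,
        filter_filter]
      congr 2
      refine filter_congr fun i _ => ?_
      have : 2 ^ K * r < 2 * (2 ^ K * r) := by linarith [(by positivity : 0 < 2 ^ K * r)]
      constructor
      · exact fun h => lt_of_not_ge h.2
      · exact fun h => ⟨this.trans h, not_le.mpr h⟩
    have hK : ∑ i ∈ s with 2 ^ K * r < ρ i ∧ ρ i ≤ 2 * (2 ^ K * r), (ρ i)⁻¹ ≤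
        #{i ∈ s | ρ i ≤ 2 * (2 ^ K * r)} * (2 ^ K * r)⁻¹ := by
      calc _ ≤ ∑ i ∈ s with 2 ^ K * r < ρ i ∧ ρ i ≤ 2 * (2 ^ K * r), (2 ^ K * r)⁻¹ :=
            sum_le_sum fun i hi => inv_anti₀ (by positivity) (mem_filter.mp hi).2.1.le
        _ ≤ _ := by
            rw [sum_const, nsmul_eq_mul]
            gcongr
            exact fun h => h.2
    rw [sum_range_succ]
    linarith

lemma sum_range_two_pow_mul_sq_le (r : ℝ) (K : ℕ) :
    ∑ k ∈ range K, (2 ^ k * r) ^ 2 ≤ (2 ^ K * r) ^ 2 / 3 := by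
  induction K with
  | zero => simp only [range_zero, sum_empty]; positivity
  | succ K ih =>
    have : (2 ^ (K + 1) * r) ^ 2 = 4 * (2 ^ K * r) ^ 2 := by ring
    rw [sum_range_succ, this]
    linarith

lemma sum_range_inv_two_pow_mul_le {r : ℝ} (hr : 0 < r) (K : ℕ) :
    ∑ k ∈ range K, (2 ^ k * r)⁻¹ ≤ 2 * r⁻¹ := by
  calc ∑ k ∈ range K, (2 ^ k * r)⁻¹ = (∑ k ∈ range K, (1 / 2 : ℝ) ^ k) * r⁻¹ := by
        rw [sum_mul]; congr! 1 with k; simp [mul_comm]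
    _ ≤ 2 * r⁻¹ := by gcongr; exact sum_geometric_two_le K

lemma sum_range_card_shell_le {M lam r : ℝ} (hM : 0 ≤ M) (hlam : 0 ≤ lam) (hr : 0 < r)
    (hcount : ∀ R, 0 < R → (#{i ∈ s | ρ i ≤ R} : ℝ) ≤ M * #s * (R + lam) ^ 3) (K : ℕ) :
    ∑ k ∈ range K, #{i ∈ s | ρ i ≤ 2 * (2 ^ k * r)} * (2 ^ k * r)⁻¹ ≤
      4 * M * #s * (8 * (2 ^ K * r) ^ 2 / 3 + 2 * lam ^ 3 / r) := by
  have hshell : ∀ k ∈ range K, #{i ∈ s | ρ i ≤ 2 * (2 ^ k * r)} * (2 ^ k * r)⁻¹ ≤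
      4 * M * #s * (8 * (2 ^ k * r) ^ 2 + lam ^ 3 * (2 ^ k * r)⁻¹) := by
    intro k _
    set a := 2 ^ k * r
    have ha : 0 < a := by positivity
    have hcube : (2 * a + lam) ^ 3 ≤ 4 * (8 * a ^ 3 + lam ^ 3) := by
      nlinarith [sq_nonneg (2 * a - lam), mul_nonneg ha.le hlam]
    calc #{i ∈ s | ρ i ≤ 2 * a} * a⁻¹ ≤ M * #s * (2 * a + lam) ^ 3 * a⁻¹ := by
          gcongr
          exact hcount (2 * a) (by positivity)
      _ ≤ M * #s * (4 * (8 * a ^ 3 + lam ^ 3)) * a⁻¹ := by gcongr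
      _ = 4 * M * #s * (8 * a ^ 2 + lam ^ 3 * a⁻¹) := by field_simp
  calc _ ≤ ∑ k ∈ range K, 4 * M * #s * (8 * (2 ^ k * r) ^ 2 + lam ^ 3 * (2 ^ k * r)⁻¹) :=
        sum_le_sum hshell
    _ = 4 * M * #s * (8 * ∑ k ∈ range K, (2 ^ k * r) ^ 2
          + lam ^ 3 * ∑ k ∈ range K, (2 ^ k * r)⁻¹) := by
        rw [← mul_sum, sum_add_distrib, ← mul_sum, ← mul_sum]
    _ ≤ 4 * M * #s * (8 * ((2 ^ K * r) ^ 2 / 3) + lam ^ 3 * (2 * r⁻¹)) := by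
        gcongr
        · exact sum_range_two_pow_mul_sq_le r K
        · exact sum_range_inv_two_pow_mul_le hr K
    _ = _ := by ring

lemma sum_inv_filter_lt_le_of_card_le_cube {A lam r : ℝ} (hA : 0 < A) (hlam : 0 ≤ lam)
    (hr : 0 < r) (hcount : ∀ R, 0 < R → (#{i ∈ s | ρ i ≤ R} : ℝ) ≤ A ^ 3 * #s * (R + lam) ^ 3) :
    ∑ i ∈ s with r < ρ i, (ρ i)⁻¹ ≤ #s * (8 * A ^ 3 * lam ^ 3 / r + 44 * A) := by
  have hfar : ∀ T, A⁻¹ ≤ T → ∑ i ∈ s with T < ρ i, (ρ i)⁻¹ ≤ #s * A := fun T hT =>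
    (sum_inv_filter_lt_le_card_mul_inv s ρ ((inv_pos.mpr hA).trans_le hT)).trans
      (by gcongr; exact inv_le_of_inv_le₀ hA hT)
  have hnear : 0 ≤ (#s : ℝ) * (8 * A ^ 3 * lam ^ 3 / r + 43 * A) := by positivity
  by_cases hrA : A⁻¹ ≤ r
  · linarith [hfar r hrA]
  -- the dyadic scales `2 ^ k * r` are cut off at the first one exceeding `A⁻¹`
  obtain ⟨K, hK, hK'⟩ := exists_nat_pow_near (one_le_div hr |>.mpr (not_le.mp hrA).le)
    (one_lt_two : (1 : ℝ) < 2)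
  rw [le_div_iff₀ hr] at hK
  rw [div_lt_iff₀ hr] at hK'
  have hhead := sum_range_card_shell_le s ρ (by positivity) hlam hr hcount (K + 1)
  have hsq : (2 ^ (K + 1) * r) ^ 2 ≤ 4 * (A⁻¹) ^ 2 := by
    calc (2 ^ (K + 1) * r) ^ 2 = (2 * (2 ^ K * r)) ^ 2 := by ring
      _ ≤ (2 * A⁻¹) ^ 2 := by gcongr
      _ = 4 * (A⁻¹) ^ 2 := by ring
  have hhead_le : 4 * A ^ 3 * #s * (8 * (2 ^ (K + 1) * r) ^ 2 / 3 + 2 * lam ^ 3 / r) ≤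
      #s * (8 * A ^ 3 * lam ^ 3 / r + 43 * A) := by
    calc _ = 32 / 3 * #s * (A ^ 3 * (2 ^ (K + 1) * r) ^ 2) + #s * (8 * A ^ 3 * lam ^ 3 / r) := by
          ring
      _ ≤ 32 / 3 * #s * (A ^ 3 * (4 * (A⁻¹) ^ 2)) + #s * (8 * A ^ 3 * lam ^ 3 / r) := by gcongr
      _ = #s * (8 * A ^ 3 * lam ^ 3 / r + 128 / 3 * A) := by field_simp; ring
      _ ≤ #s * (8 * A ^ 3 * lam ^ 3 / r + 43 * A) := by gcongr; norm_num
  linarith [sum_inv_filter_lt_le_dyadic s ρ hr (K + 1), hfar _ hK'.le]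

end Dyadic

theorem stmt12 (Mbar : ℝ) (hMbar : 0 < Mbar) :
    ∃ C : ℝ, 0 < C ∧
      ∀ (N : ℕ), 1 ≤ N →
      ∀ lam : ℝ, 0 < lam → lam < (3/2) * Mbar ^ (-(1:ℝ)/3) →
      ∀ x : Fin N → EuclideanSpace ℝ (Fin 3),
      (Mconc N x lam : ℝ) ≤ Mbar * N * lam ^ 3 →
      ∀ z : EuclideanSpace ℝ (Fin 3), ∀ d : ℝ, 0 < d →
        (1 / (N : ℝ)) * ∑ i ∈ Finset.univ.filter (fun i => d / 2 < dist z (x i)),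
            (dist z (x i))⁻¹
          ≤ C * (Mbar * lam ^ 3 / d + Mbar ^ ((1:ℝ)/3)) := by
  refine ⟨44, by norm_num, fun N hN lam hlam _ x hM z d hd => ?_⟩
  set A := Mbar ^ ((1:ℝ)/3)
  have hA : 0 < A := Real.rpow_pos_of_pos hMbar _
  have hA3 : A ^ 3 = Mbar := by
    rw [← Real.rpow_natCast, ← Real.rpow_mul hMbar.le]
    norm_num
  have hN' : (0 : ℝ) < N := by exact_mod_cast hN
  have hsum := sum_inv_filter_lt_le_of_card_le_cube univ (fun i => dist z (x i)) hA hlam.le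
    (half_pos hd) fun R hR => by
      simpa only [hA3, card_univ, Fintype.card_fin] using
        card_filter_dist_le_le_cube x hlam hR.le hM
  rw [card_univ, Fintype.card_fin, hA3] at hsum
  calc (1 / (N : ℝ)) * ∑ i ∈ univ.filter (fun i => d / 2 < dist z (x i)), (dist z (x i))⁻¹
      ≤ (1 / (N : ℝ)) * (N * (8 * Mbar * lam ^ 3 / (d / 2) + 44 * A)) := by gcongr
    _ = 16 * (Mbar * lam ^ 3 / d) + 44 * A := by field_simp; ring
    _ ≤ 44 * (Mbar * lam ^ 3 / d + A) := by
        have : 0 ≤ Mbar * lam ^ 3 / d := by positivity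
        linarith
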